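/- arXiv:2011.14262 — 6 statements merged into one kernel-verified Lean document; each statement's English description precedes it below -/
import Mathlib

section
/- Let ψ₁ ≠ ψ₂ be positive reals, K a finite index set, P : K → [0,1] a probability distribution, and ⟨k⟩ = Σ_k k·P(k) > 0. Then there exist no Θ₁ > 0 and Θ₂ > 0 satisfying simultaneously Θ₁ = (ψ₁/⟨k⟩)·Σ_{k'} k'²P(k')Θ₁/(1+ψ₁k'Θ₁+ψ₂k'Θ₂) and Θ₂ = (ψ₂/⟨k⟩)·Σ_{k'} k'²P(k')Θ₂/(1+ψ₁k'Θ₁+ψ₂k'Θ₂). -/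
/-!
Both equations share the factor `S = ∑ k'² P(k') / (1 + ψ₁ k' Θ₁ + ψ₂ k' Θ₂)`. Dividing the
`i`-th equation by `Θᵢ ≠ 0` gives `(ψᵢ / ⟨k⟩) S = 1`, so `ψ₁ / ⟨k⟩ = S⁻¹ = ψ₂ / ⟨k⟩`.
-/

open Finset

theorem sum_mul_div_eq_mul_sum_div {ι K : Type*} [Semifield K] (s : Finset ι) (f d : ι → K)
    (x : K) : ∑ i ∈ s, f i * x / d i = x * ∑ i ∈ s, f i / d i := by
  rw [mul_sum]
  exact sum_congr rfl fun _ _ => by ring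

theorem mul_eq_one_of_eq_mul_mul {K : Type*} [Field K] {x c S : K} (hx : x ≠ 0)
    (h : x = c * (x * S)) : c * S = 1 :=
  mul_left_cancel₀ hx (by linear_combination -h)

theorem eq_of_div_mul_eq_one {K : Type*} [Field K] {a b c S : K} (ha : a / c * S = 1)
    (hb : b / c * S = 1) : a = b := by
  have hc : c ≠ 0 := by
    rintro rfl
    simp at ha
  exact (div_left_inj' hc).mp
    ((eq_inv_of_mul_eq_one_left ha).trans (eq_inv_of_mul_eq_one_left hb).symm)

theorem no_positive_coexistence_general
    (K : ℕ) (P : ℕ → ℝ)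
    (avgk : ℝ)
    (ψ₁ ψ₂ : ℝ) (hψne : ψ₁ ≠ ψ₂) :
    ¬ ∃ Θ₁ Θ₂ : ℝ, 0 < Θ₁ ∧ 0 < Θ₂ ∧
      Θ₁ = (ψ₁ / avgk) * ∑ k ∈ Finset.range (K + 1),
        (k : ℝ) ^ 2 * P k * Θ₁ / (1 + ψ₁ * k * Θ₁ + ψ₂ * k * Θ₂) ∧
      Θ₂ = (ψ₂ / avgk) * ∑ k ∈ Finset.range (K + 1),
        (k : ℝ) ^ 2 * P k * Θ₂ / (1 + ψ₁ * k * Θ₁ + ψ₂ * k * Θ₂) := by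
  rintro ⟨Θ₁, Θ₂, hΘ₁, hΘ₂, h₁, h₂⟩
  rw [sum_mul_div_eq_mul_sum_div (f := fun k : ℕ => (k : ℝ) ^ 2 * P k)] at h₁ h₂
  exact hψne (eq_of_div_mul_eq_one (mul_eq_one_of_eq_mul_mul hΘ₁.ne' h₁)
    (mul_eq_one_of_eq_mul_mul hΘ₂.ne' h₂))

/-- Non-coexistence of two competing epidemics: there are no
positive solutions (Θ₁, Θ₂) to the pair of steady-state self-consistency
equations when ψ₁ ≠ ψ₂. -/
theorem no_positive_coexistence
    (K : ℕ) (P : ℕ → ℝ)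
    (hP0 : ∀ k, 0 ≤ P k) (hP1 : ∀ k, P k ≤ 1)
    (hPsum : ∑ k ∈ Finset.range (K + 1), P k = 1)
    (avgk : ℝ)
    (havgk : avgk = ∑ k ∈ Finset.range (K + 1), (k : ℝ) * P k)
    (havgk_pos : 0 < avgk)
    (ψ₁ ψ₂ : ℝ) (hψ₁ : 0 < ψ₁) (hψ₂ : 0 < ψ₂) (hψne : ψ₁ ≠ ψ₂) :
    ¬ ∃ Θ₁ Θ₂ : ℝ, 0 < Θ₁ ∧ 0 < Θ₂ ∧
      Θ₁ = (ψ₁ / avgk) * ∑ k ∈ Finset.range (K + 1),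
        (k : ℝ) ^ 2 * P k * Θ₁ / (1 + ψ₁ * k * Θ₁ + ψ₂ * k * Θ₂) ∧
      Θ₂ = (ψ₂ / avgk) * ∑ k ∈ Finset.range (K + 1),
        (k : ℝ) ^ 2 * P k * Θ₂ / (1 + ψ₁ * k * Θ₁ + ψ₂ * k * Θ₂) :=
  no_positive_coexistence_general K P avgk ψ₁ ψ₂ hψne
end

section
/- Let ψ > 0, P : {0,...,K} → [0,1] a probability distribution with ⟨k⟩ = Σ_k kP(k) > 0, ⟨k²⟩ = Σ_k k²P(k), and P(k) > 0 for some k ≥ 1. The equation Θ = (ψ/⟨k⟩)·Σ_{k'} k'²P(k')Θ/(1+ψk'Θ) has a solution Θ ∈ (0,1) if and only if ψ·⟨k²⟩/⟨k⟩ > 1. -/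
/-!
Dividing by `Θ ≠ 0`, a nontrivial solution is a root of `ψ F(Θ) = ⟨k⟩`, where
`F(θ) = ∑ k² P(k) / (1 + ψ k θ)`. The function `F` is continuous and strictly decreasing on
`[0, ∞)` with `F(0) = ⟨k²⟩`, while `ψ θ F(θ) = ∑ k P(k) ψkθ / (1 + ψkθ) < ⟨k⟩` for `θ > 0`, so
`ψ F(1) < ⟨k⟩`. Monotonicity forces `ψ ⟨k²⟩ > ⟨k⟩` at a root, and conversely the intermediate
value theorem on `[0, 1]` produces one.
-/

open Finset Set

noncomputable def weightedSecondMoment (s : Finset ℕ) (P : ℕ → ℝ) (ψ θ : ℝ) : ℝ :=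
  ∑ k ∈ s, (k : ℝ) ^ 2 * P k / (1 + ψ * k * θ)

theorem weightedSecondMoment_zero (s : Finset ℕ) (P : ℕ → ℝ) (ψ : ℝ) :
    weightedSecondMoment s P ψ 0 = ∑ k ∈ s, (k : ℝ) ^ 2 * P k := by
  simp [weightedSecondMoment]

theorem sum_mul_div_eq_mul_weightedSecondMoment (s : Finset ℕ) (P : ℕ → ℝ) (ψ θ : ℝ) :
    ∑ k ∈ s, (k : ℝ) ^ 2 * P k * θ / (1 + ψ * k * θ) = θ * weightedSecondMoment s P ψ θ := by
  rw [weightedSecondMoment, mul_sum]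
  exact sum_congr rfl fun k _ => by ring

section

variable {s : Finset ℕ} {P : ℕ → ℝ} {ψ : ℝ}

theorem continuousOn_weightedSecondMoment (hψ : 0 ≤ ψ) :
    ContinuousOn (weightedSecondMoment s P ψ) (Ici 0) := by
  refine continuousOn_finsetSum _ fun k _ => continuousOn_const.div (by fun_prop) ?_
  intro θ (hθ : 0 ≤ θ)
  positivity

theorem exists_pos_pos_of_sum_mul_pos (hP : ∀ k, 0 ≤ P k)
    (hm1 : 0 < ∑ k ∈ s, (k : ℝ) * P k) : ∃ k ∈ s, 0 < (k : ℝ) ∧ 0 < P k := by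
  obtain ⟨k, hk, hkP⟩ :=
    exists_lt_of_sum_lt (f := fun _ => (0 : ℝ)) (g := fun k => k * P k) (by simpa using hm1)
  exact ⟨k, hk, pos_of_mul_pos_left hkP (hP k), pos_of_mul_pos_right hkP k.cast_nonneg⟩

theorem strictAntiOn_weightedSecondMoment (hP : ∀ k, 0 ≤ P k) (hψ : 0 < ψ)
    (hm1 : 0 < ∑ k ∈ s, (k : ℝ) * P k) : StrictAntiOn (weightedSecondMoment s P ψ) (Ici 0) := by
  intro a (ha : 0 ≤ a) b (hb : 0 ≤ b) hab
  obtain ⟨k₀, hk₀, hk₀pos, hPk₀⟩ := exists_pos_pos_of_sum_mul_pos hP hm1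
  refine sum_lt_sum (fun k _ => ?_) ⟨k₀, hk₀, ?_⟩
  · exact div_le_div_of_nonneg_left (mul_nonneg (sq_nonneg _) (hP k)) (by positivity)
      (by gcongr)
  · exact div_lt_div_of_pos_left (mul_pos (pow_pos hk₀pos 2) hPk₀) (by positivity) (by gcongr)

/-- Termwise, `ψ θ k² P(k) / (1 + ψkθ) = k P(k) · ψkθ / (1 + ψkθ)` and the last factor is `< 1`. -/
theorem mul_mul_weightedSecondMoment_lt (hP : ∀ k, 0 ≤ P k) (hψ : 0 ≤ ψ)
    (hm1 : 0 < ∑ k ∈ s, (k : ℝ) * P k) {θ : ℝ} (hθ : 0 < θ) :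
    ψ * θ * weightedSecondMoment s P ψ θ < ∑ k ∈ s, (k : ℝ) * P k := by
  obtain ⟨k₀, hk₀, hk₀pos, hPk₀⟩ := exists_pos_pos_of_sum_mul_pos hP hm1
  rw [weightedSecondMoment, mul_sum]
  refine sum_lt_sum (fun k _ => ?_) ⟨k₀, hk₀, ?_⟩
  · rw [mul_div_assoc', div_le_iff₀ (by positivity)]
    nlinarith [mul_nonneg k.cast_nonneg (hP k)]
  · rw [mul_div_assoc', div_lt_iff₀ (by positivity)]
    nlinarith [mul_pos hk₀pos hPk₀]

theorem selfConsistent_iff {avgk Θ : ℝ} (havgk : avgk ≠ 0) (hΘ : Θ ≠ 0) :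
    Θ = (ψ / avgk) * ∑ k ∈ s, (k : ℝ) ^ 2 * P k * Θ / (1 + ψ * k * Θ) ↔
      ψ * weightedSecondMoment s P ψ Θ = avgk := by
  rw [sum_mul_div_eq_mul_weightedSecondMoment]
  constructor
  · intro h
    field_simp at h
    linarith
  · intro h
    field_simp
    linarith

end

theorem nontrivial_solution_iff_threshold_general
    (K : ℕ) (P : ℕ → ℝ)
    (hP0 : ∀ k, 0 ≤ P k)
    (avgk m2 : ℝ)
    (havgk : avgk = ∑ k ∈ Finset.range (K + 1), (k : ℝ) * P k)
    (hm2 : m2 = ∑ k ∈ Finset.range (K + 1), (k : ℝ) ^ 2 * P k)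
    (havgk_pos : 0 < avgk)
    (ψ : ℝ) (hψ : 0 < ψ) :
    (∃ Θ ∈ Set.Ioo (0 : ℝ) 1,
      Θ = (ψ / avgk) * ∑ k' ∈ Finset.range (K + 1),
        (k' : ℝ) ^ 2 * P k' * Θ / (1 + ψ * k' * Θ)) ↔ 1 < ψ * m2 / avgk := by
  set F := weightedSecondMoment (range (K + 1)) P ψ
  have hm1 : 0 < ∑ k ∈ range (K + 1), (k : ℝ) * P k := havgk ▸ havgk_pos
  have hF0 : F 0 = m2 := hm2 ▸ weightedSecondMoment_zero _ P ψ
  rw [one_lt_div havgk_pos]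
  constructor
  · rintro ⟨Θ, ⟨hΘ0, -⟩, hΘ⟩
    rw [selfConsistent_iff havgk_pos.ne' hΘ0.ne'] at hΘ
    calc avgk = ψ * F Θ := hΘ.symm
      _ < ψ * F 0 := by
        gcongr
        exact strictAntiOn_weightedSecondMoment hP0 hψ hm1 self_mem_Ici hΘ0.le hΘ0
      _ = ψ * m2 := by rw [hF0]
  · intro hthreshold
    have hF1 : ψ * F 1 < avgk := by
      simpa [havgk] using mul_mul_weightedSecondMoment_lt hP0 hψ.le hm1 one_pos
    have hcont : ContinuousOn (fun θ => ψ * F θ) (Icc 0 1) :=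
      continuousOn_const.mul ((continuousOn_weightedSecondMoment hψ.le).mono Icc_subset_Ici_self)
    obtain ⟨Θ, hΘ, hΘroot⟩ :=
      intermediate_value_Ioo' zero_le_one hcont ⟨hF1, by simpa only [hF0] using hthreshold⟩
    exact ⟨Θ, hΘ, (selfConsistent_iff havgk_pos.ne' hΘ.1.ne').mpr hΘroot⟩

/-- The self-consistency equation has a nontrivial solution
Θ ∈ (0,1) if and only if ψ⟨k²⟩/⟨k⟩ > 1. -/
theorem nontrivial_solution_iff_threshold
    (K : ℕ) (P : ℕ → ℝ)
    (hP0 : ∀ k, 0 ≤ P k) (hP1 : ∀ k, P k ≤ 1)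
    (hPsum : ∑ k ∈ Finset.range (K + 1), P k = 1)
    (avgk m2 : ℝ)
    (havgk : avgk = ∑ k ∈ Finset.range (K + 1), (k : ℝ) * P k)
    (hm2 : m2 = ∑ k ∈ Finset.range (K + 1), (k : ℝ) ^ 2 * P k)
    (havgk_pos : 0 < avgk)
    (ψ : ℝ) (hψ : 0 < ψ)
    (hnontriv : ∃ k ∈ Finset.range (K + 1), 1 ≤ k ∧ 0 < P k) :
    (∃ Θ ∈ Set.Ioo (0 : ℝ) 1,
      Θ = (ψ / avgk) * ∑ k' ∈ Finset.range (K + 1),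
        (k' : ℝ) ^ 2 * P k' * Θ / (1 + ψ * k' * Θ)) ↔ 1 < ψ * m2 / avgk :=
  nontrivial_solution_iff_threshold_general K P hP0 avgk m2 havgk hm2 havgk_pos ψ hψ
end

section
/- Let ψ > ⟨k⟩/⟨k²⟩ where ⟨k⟩ = Σ_k kP(k) > 0 and ⟨k²⟩ = Σ_k k²P(k) for a probability distribution P on {0,...,K} with P(k) > 0 for some k ≥ 1. Then the fixed-point equation Θ = (ψ/⟨k⟩)·Σ_{k'} k'²P(k')Θ/(1+ψk'Θ) has a unique solution Θ* in (0,1). -/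
/-!
Dividing the fixed-point equation by `Θ ≠ 0` leaves `S Θ = ⟨k⟩/ψ` with
`S Θ = Σ k² P(k) / (1 + ψ k Θ)`. The function `S` is continuous and strictly decreasing on
`[0, 1]`, with `S 0 = ⟨k²⟩ > ⟨k⟩/ψ` by the threshold condition and `S 1 < ⟨k⟩/ψ` because
`k² / (1 + ψ k) < k / ψ` termwise, so the intermediate value theorem gives exactly one solution in `(0, 1)`.
-/

open Finset

open Set in
theorem existsUnique_mem_Ioo_eq_of_strictAntiOn {f : ℝ → ℝ} {a b c : ℝ} (hab : a ≤ b)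
    (hf : ContinuousOn f (Icc a b)) (hanti : StrictAntiOn f (Icc a b)) (hc : c ∈ Ioo (f b) (f a)) :
    ∃! x, x ∈ Ioo a b ∧ f x = c := by
  obtain ⟨x, hx, hfx⟩ := intermediate_value_Ioo' hab hf hc
  refine ⟨x, ⟨hx, hfx⟩, fun y ⟨hy, hfy⟩ => ?_⟩
  exact hanti.injOn (Ioo_subset_Icc_self hy) (Ioo_subset_Icc_self hx) (hfy.trans hfx.symm)

section WeightedSum

variable {ι : Type*} {s : Finset ι} {w c : ι → ℝ}

theorem strictAntiOn_sum_div_one_add_mul (hw : ∀ i ∈ s, 0 ≤ w i) (hc : ∀ i ∈ s, 0 ≤ c i)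
    (hpos : ∃ i ∈ s, 0 < w i ∧ 0 < c i) :
    StrictAntiOn (fun x => ∑ i ∈ s, w i / (1 + c i * x)) (Set.Ici 0) := by
  intro x (hx : 0 ≤ x) y _ hxy
  obtain ⟨j, hj, hwj, hcj⟩ := hpos
  have hden : ∀ i ∈ s, 0 < 1 + c i * x := fun i hi => by have := hc i hi; positivity
  refine sum_lt_sum (fun i hi => ?_) ⟨j, hj, ?_⟩
  · exact div_le_div_of_nonneg_left (hw i hi) (hden i hi) (by gcongr; exact hc i hi)
  · exact div_lt_div_of_pos_left hwj (hden j hj) (by gcongr)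

theorem continuousOn_sum_div_one_add_mul (hc : ∀ i ∈ s, 0 ≤ c i) :
    ContinuousOn (fun x => ∑ i ∈ s, w i / (1 + c i * x)) (Set.Ici 0) := by
  refine continuousOn_finsetSum s fun i hi => continuousOn_const.div (by fun_prop) ?_
  intro x (hx : 0 ≤ x)
  have := hc i hi
  positivity

theorem sum_mul_div_one_add_mul (x : ℝ) :
    ∑ i ∈ s, w i * x / (1 + c i * x) = x * ∑ i ∈ s, w i / (1 + c i * x) := by
  rw [mul_sum]
  exact sum_congr rfl fun i _ => by ring

end WeightedSum

theorem sum_sq_mul_div_one_add_mul_lt {ι : Type*} {s : Finset ι} {d p : ι → ℝ} {ψ : ℝ}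
    (hψ : 0 < ψ) (hd : ∀ i ∈ s, 0 ≤ d i) (hp : ∀ i ∈ s, 0 ≤ p i)
    (hpos : ∃ i ∈ s, 0 < d i * p i) :
    ∑ i ∈ s, d i ^ 2 * p i / (1 + ψ * d i) < (∑ i ∈ s, d i * p i) / ψ := by
  rw [sum_div]
  obtain ⟨j, hj, hdpj⟩ := hpos
  refine sum_lt_sum (fun i hi => ?_) ⟨j, hj, ?_⟩
  · have := hd i hi
    have hdp := mul_nonneg this (hp i hi)
    rw [div_le_div_iff₀ (by positivity) hψ]
    nlinarith
  · have := hd j hj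
    rw [div_lt_div_iff₀ (by positivity) hψ]
    nlinarith

theorem unique_nontrivial_fixed_point_general
    (K : ℕ) (P : ℕ → ℝ)
    (hP0 : ∀ k, 0 ≤ P k)
    (avgk m2 : ℝ)
    (havgk : avgk = ∑ k ∈ Finset.range (K + 1), (k : ℝ) * P k)
    (hm2 : m2 = ∑ k ∈ Finset.range (K + 1), (k : ℝ) ^ 2 * P k)
    (havgk_pos : 0 < avgk)
    (ψ : ℝ) (hψ : avgk / m2 < ψ) :
    ∃! Θ : ℝ, Θ ∈ Set.Ioo (0 : ℝ) 1 ∧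
      Θ = (ψ / avgk) * ∑ k' ∈ Finset.range (K + 1),
        (k' : ℝ) ^ 2 * P k' * Θ / (1 + ψ * k' * Θ) := by
  set S : ℝ → ℝ := fun Θ => ∑ k ∈ range (K + 1), (k : ℝ) ^ 2 * P k / (1 + ψ * k * Θ)
  obtain ⟨k, hk, hkP⟩ : ∃ k ∈ range (K + 1), 0 < (k : ℝ) * P k :=
    exists_lt_of_sum_lt <| by rwa [sum_const_zero, ← havgk]
  have hk_pos : 0 < (k : ℝ) := pos_of_mul_pos_left hkP (hP0 k)
  have hPk_pos : 0 < P k := pos_of_mul_pos_right hkP k.cast_nonneg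
  have hm2_pos : 0 < m2 :=
    hm2 ▸ sum_pos' (fun i _ => by have := hP0 i; positivity) ⟨k, hk, by positivity⟩
  have hψ_pos : 0 < ψ := (div_pos havgk_pos hm2_pos).trans hψ
  have hS0 : S 0 = m2 := by simp [S, hm2]
  have hS1 : S 1 < avgk / ψ := by
    simpa [S, havgk] using sum_sq_mul_div_one_add_mul_lt (s := range (K + 1)) hψ_pos
      (fun i _ => i.cast_nonneg) (fun i _ => hP0 i) ⟨k, hk, hkP⟩
  have hSanti : StrictAntiOn S (Set.Ici 0) :=
    strictAntiOn_sum_div_one_add_mul (fun i _ => by have := hP0 i; positivity)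
      (fun i _ => by positivity) ⟨k, hk, by positivity, by positivity⟩
  have hScont : ContinuousOn S (Set.Ici 0) :=
    continuousOn_sum_div_one_add_mul fun i _ => by positivity
  have hthreshold : avgk / ψ < S 0 := by
    rwa [hS0, div_lt_iff₀ hψ_pos, mul_comm, ← div_lt_iff₀ hm2_pos]
  refine (existsUnique_congr fun Θ => and_congr_right fun hΘ => ?_).mp
    (existsUnique_mem_Ioo_eq_of_strictAntiOn zero_le_one (hScont.mono Set.Icc_subset_Ici_self)
      (hSanti.mono Set.Icc_subset_Ici_self) ⟨hS1, hthreshold⟩)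
  rw [sum_mul_div_one_add_mul, mul_left_comm, left_eq_mul₀ hΘ.1.ne', div_mul_eq_mul_div,
    div_eq_one_iff_eq havgk_pos.ne', eq_div_iff hψ_pos.ne', mul_comm]

/-- If ψ > ⟨k⟩/⟨k²⟩ then the fixed-point equation
Θ = (ψ/⟨k⟩)·Σ_{k'} k'²P(k')Θ/(1+ψk'Θ) has a unique solution in (0,1). -/
theorem unique_nontrivial_fixed_point
    (K : ℕ) (P : ℕ → ℝ)
    (hP0 : ∀ k, 0 ≤ P k) (hP1 : ∀ k, P k ≤ 1)
    (hPsum : ∑ k ∈ Finset.range (K + 1), P k = 1)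
    (avgk m2 : ℝ)
    (havgk : avgk = ∑ k ∈ Finset.range (K + 1), (k : ℝ) * P k)
    (hm2 : m2 = ∑ k ∈ Finset.range (K + 1), (k : ℝ) ^ 2 * P k)
    (havgk_pos : 0 < avgk)
    (hnontriv : ∃ k ∈ Finset.range (K + 1), 1 ≤ k ∧ 0 < P k)
    (ψ : ℝ) (hψ : avgk / m2 < ψ) :
    ∃! Θ : ℝ, Θ ∈ Set.Ioo (0 : ℝ) 1 ∧
      Θ = (ψ / avgk) * ∑ k' ∈ Finset.range (K + 1),
        (k' : ℝ) ^ 2 * P k' * Θ / (1 + ψ * k' * Θ) :=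
  unique_nontrivial_fixed_point_general K P hP0 avgk m2 havgk hm2 havgk_pos ψ hψ
end

section
/- Fix x > ⟨k⟩/⟨k²⟩ and a probability distribution P on {0,...,K} with ⟨k⟩ > 0 and P(k) > 0 for some k ≥ 1. Let H(x,y) = (1/⟨k⟩)·Σ_{k'} k'²P(k')xy/(1+k'xy), and define the sequence y₀ ∈ (0,1), yₙ₊₁ = H(x,yₙ). Then the sequence (yₙ) is monotone (increasing if y₁ > y₀, decreasing if y₁ < y₀), bounded in (0,1), and converges to the unique fixed point y_x ∈ (0,1) of y = H(x,y). -/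
/-!
Write `H y = y * G y` with `G y = (1 / ⟨k⟩) * ∑ k² P(k) x / (1 + k x y)`. For `x ≥ 0` (which
follows from `x > ⟨k⟩ / ⟨k²⟩` since `⟨k⟩ ≤ ⟨k²⟩`), `H` is increasing and `G` decreasing on
`[0, ∞)`. At the fixed point `G y_x = 1`, so `H y ≥ y` below `y_x` and `H y ≤ y` above it.
Hence the interval between `y₀` and `y_x` is mapped into itself and the iterates move
monotonically towards `y_x`; their limit is a fixed point of the continuous map `H` inside
`(0, 1)`, so it is `y_x`.
-/

open Filter Set Function Topology

section Iteration

variable {α : Type*} {f : α → α} {s : Set α} {a p : α}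

section Preorder

variable [Preorder α]

theorem mapsTo_Icc_of_le_fixedPt (hs : s.OrdConnected) (hp : p ∈ s) (hfp : f p = p)
    (hf : MonotoneOn f s) (hle : ∀ z ∈ s, z ≤ p → z ≤ f z) (ha : a ∈ s) :
    MapsTo f (Icc a p) (Icc a p) := fun z hz =>
  have hz' : z ∈ s := hs.out ha hp hz
  ⟨hz.1.trans (hle z hz' hz.2), hfp ▸ hf hz' hp hz.2⟩

theorem mapsTo_Icc_of_fixedPt_le (hs : s.OrdConnected) (hp : p ∈ s) (hfp : f p = p)
    (hf : MonotoneOn f s) (hge : ∀ z ∈ s, p ≤ z → f z ≤ z) (ha : a ∈ s) :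
    MapsTo f (Icc p a) (Icc p a) := fun z hz =>
  have hz' : z ∈ s := hs.out hp ha hz
  ⟨hfp ▸ hf hp hz' hz.1, (hge z hz' hz.1).trans hz.2⟩

theorem monotone_iterate_of_le_fixedPt (hs : s.OrdConnected) (hp : p ∈ s) (hfp : f p = p)
    (hf : MonotoneOn f s) (hle : ∀ z ∈ s, z ≤ p → z ≤ f z) (ha : a ∈ s) (hap : a ≤ p) :
    Monotone fun n => f^[n] a :=
  monotone_nat_of_le_succ fun n => by
    have hn := (mapsTo_Icc_of_le_fixedPt hs hp hfp hf hle ha).iterate n ⟨le_rfl, hap⟩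
    rw [iterate_succ_apply']
    exact hle _ (hs.out ha hp hn) hn.2

theorem antitone_iterate_of_fixedPt_le (hs : s.OrdConnected) (hp : p ∈ s) (hfp : f p = p)
    (hf : MonotoneOn f s) (hge : ∀ z ∈ s, p ≤ z → f z ≤ z) (ha : a ∈ s) (hpa : p ≤ a) :
    Antitone fun n => f^[n] a :=
  monotone_iterate_of_le_fixedPt (α := αᵒᵈ) hs.dual hp hfp hf.dual hge ha hpa

end Preorder

section LinearOrder

variable [LinearOrder α]

theorem iterate_mem_of_ordConnected (hs : s.OrdConnected) (hp : p ∈ s) (hfp : f p = p)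
    (hf : MonotoneOn f s) (hle : ∀ z ∈ s, z ≤ p → z ≤ f z) (hge : ∀ z ∈ s, p ≤ z → f z ≤ z)
    (ha : a ∈ s) (n : ℕ) : f^[n] a ∈ s := by
  rcases le_total a p with hap | hpa
  · exact hs.out ha hp <| (mapsTo_Icc_of_le_fixedPt hs hp hfp hf hle ha).iterate n ⟨le_rfl, hap⟩
  · exact hs.out hp ha <| (mapsTo_Icc_of_fixedPt_le hs hp hfp hf hge ha).iterate n ⟨hpa, le_rfl⟩

theorem monotone_iterate_of_lt_map (hs : s.OrdConnected) (hp : p ∈ s) (hfp : f p = p)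
    (hf : MonotoneOn f s) (hle : ∀ z ∈ s, z ≤ p → z ≤ f z) (hge : ∀ z ∈ s, p ≤ z → f z ≤ z)
    (ha : a ∈ s) (h : a < f a) : Monotone fun n => f^[n] a := by
  rcases le_total a p with hap | hpa
  · exact monotone_iterate_of_le_fixedPt hs hp hfp hf hle ha hap
  · exact absurd (antitone_iterate_of_fixedPt_le hs hp hfp hf hge ha hpa zero_le_one) h.not_ge

theorem antitone_iterate_of_map_lt (hs : s.OrdConnected) (hp : p ∈ s) (hfp : f p = p)
    (hf : MonotoneOn f s) (hle : ∀ z ∈ s, z ≤ p → z ≤ f z) (hge : ∀ z ∈ s, p ≤ z → f z ≤ z)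
    (ha : a ∈ s) (h : f a < a) : Antitone fun n => f^[n] a :=
  monotone_iterate_of_lt_map (α := αᵒᵈ) hs.dual hp hfp hf.dual hge hle ha h

end LinearOrder

variable [ConditionallyCompleteLinearOrder α] [TopologicalSpace α] [OrderTopology α]

theorem tendsto_iterate_of_le_fixedPt (hs : s.OrdConnected) (hp : p ∈ s) (hfp : f p = p)
    (hf : MonotoneOn f s) (hle : ∀ z ∈ s, z ≤ p → z ≤ f z) (hcont : ContinuousOn f s)
    (huniq : ∀ z ∈ s, f z = z → z = p) (ha : a ∈ s) (hap : a ≤ p) :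
    Tendsto (fun n => f^[n] a) atTop (𝓝 p) := by
  set u := fun n => f^[n] a
  have hsub : Icc a p ⊆ s := hs.out ha hp
  have hu : ∀ n, u n ∈ Icc a p :=
    fun n => (mapsTo_Icc_of_le_fixedPt hs hp hfp hf hle ha).iterate n ⟨le_rfl, hap⟩
  have hT : Tendsto u atTop (𝓝 (⨆ n, u n)) :=
    tendsto_atTop_ciSup (monotone_iterate_of_le_fixedPt hs hp hfp hf hle ha hap)
      ⟨p, forall_mem_range.2 fun n => (hu n).2⟩
  have hL : (⨆ n, u n) ∈ Icc a p := isClosed_Icc.mem_of_tendsto hT (.of_forall hu)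
  have hfu : Tendsto (fun n => f (u n)) atTop (𝓝 (f (⨆ n, u n))) :=
    (hcont _ (hsub hL)).tendsto.comp
      (tendsto_nhdsWithin_iff.2 ⟨hT, .of_forall fun n => hsub (hu n)⟩)
  have hfix : f (⨆ n, u n) = ⨆ n, u n := by
    refine tendsto_nhds_unique hfu ?_
    exact (hT.comp (tendsto_add_atTop_nat 1)).congr fun n => iterate_succ_apply' f n a
  rwa [huniq _ (hsub hL) hfix] at hT

theorem tendsto_iterate_of_fixedPt_le (hs : s.OrdConnected) (hp : p ∈ s) (hfp : f p = p)
    (hf : MonotoneOn f s) (hge : ∀ z ∈ s, p ≤ z → f z ≤ z) (hcont : ContinuousOn f s)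
    (huniq : ∀ z ∈ s, f z = z → z = p) (ha : a ∈ s) (hpa : p ≤ a) :
    Tendsto (fun n => f^[n] a) atTop (𝓝 p) :=
  tendsto_iterate_of_le_fixedPt (α := αᵒᵈ) hs.dual hp hfp hf.dual hge hcont huniq ha hpa

theorem tendsto_iterate_of_ordConnected (hs : s.OrdConnected) (hp : p ∈ s) (hfp : f p = p)
    (hf : MonotoneOn f s) (hle : ∀ z ∈ s, z ≤ p → z ≤ f z) (hge : ∀ z ∈ s, p ≤ z → f z ≤ z)
    (hcont : ContinuousOn f s) (huniq : ∀ z ∈ s, f z = z → z = p) (ha : a ∈ s) :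
    Tendsto (fun n => f^[n] a) atTop (𝓝 p) := by
  rcases le_total a p with hap | hpa
  · exact tendsto_iterate_of_le_fixedPt hs hp hfp hf hle hcont huniq ha hap
  · exact tendsto_iterate_of_fixedPt_le hs hp hfp hf hge hcont huniq ha hpa

end Iteration

theorem sum_natCast_mul_le_sum_sq_mul {P : ℕ → ℝ} (hP : ∀ k, 0 ≤ P k) (t : Finset ℕ) :
    ∑ k ∈ t, (k : ℝ) * P k ≤ ∑ k ∈ t, (k : ℝ) ^ 2 * P k :=
  Finset.sum_le_sum fun k _ =>
    mul_le_mul_of_nonneg_right (by exact_mod_cast Nat.le_self_pow two_ne_zero k) (hP k)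

/-- The paper's `y ↦ H(x, y)`; `sisGain` below is `H(x, y) / y`. -/
noncomputable def sisMap (K : ℕ) (P : ℕ → ℝ) (avgk x y : ℝ) : ℝ :=
  (1 / avgk) * ∑ k ∈ Finset.range (K + 1), (k : ℝ) ^ 2 * P k * x * y / (1 + k * x * y)

noncomputable def sisGain (K : ℕ) (P : ℕ → ℝ) (avgk x y : ℝ) : ℝ :=
  (1 / avgk) * ∑ k ∈ Finset.range (K + 1), (k : ℝ) ^ 2 * P k * x / (1 + k * x * y)

section SISMap

variable {K : ℕ} {P : ℕ → ℝ} {avgk x : ℝ}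

theorem sisMap_eq_mul_sisGain (y : ℝ) : sisMap K P avgk x y = y * sisGain K P avgk x y := by
  rw [sisMap, sisGain, mul_left_comm y, Finset.mul_sum _ _ y]
  exact congrArg _ (Finset.sum_congr rfl fun k _ => by ring)

theorem sisGain_eq_one_of_fixedPt {p : ℝ} (hp : p ≠ 0) (hfix : sisMap K P avgk x p = p) :
    sisGain K P avgk x p = 1 := by
  rw [sisMap_eq_mul_sisGain] at hfix
  exact (mul_eq_left₀ hp).1 hfix

variable (hx : 0 ≤ x)
include hx

theorem sisMap_continuousOn : ContinuousOn (sisMap K P avgk x) (Ici 0) :=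
  continuousOn_const.mul <| continuousOn_finsetSum _ fun k _ =>
    ContinuousOn.div (by fun_prop) (by fun_prop) fun y (hy : 0 ≤ y) => by positivity

variable (hP : ∀ k, 0 ≤ P k) (havgk : 0 ≤ avgk)
include hP havgk

theorem sisGain_antitoneOn : AntitoneOn (sisGain K P avgk x) (Ici 0) := by
  intro a (ha : 0 ≤ a) b (hb : 0 ≤ b) hab
  refine mul_le_mul_of_nonneg_left (Finset.sum_le_sum fun k _ => ?_) (by positivity)
  have := hP k
  gcongr

theorem sisMap_monotoneOn : MonotoneOn (sisMap K P avgk x) (Ici 0) := by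
  intro a (ha : 0 ≤ a) b (hb : 0 ≤ b) hab
  refine mul_le_mul_of_nonneg_left (Finset.sum_le_sum fun k _ => ?_) (by positivity)
  have hc : 0 ≤ (k : ℝ) ^ 2 * P k * x := by have := hP k; positivity
  rw [div_le_div_iff₀ (by positivity) (by positivity)]
  nlinarith [mul_le_mul_of_nonneg_left hab hc]

theorem le_sisMap_of_le_of_fixedPt {a p : ℝ} (hp : 0 < p) (hfix : sisMap K P avgk x p = p)
    (ha : 0 ≤ a) (hap : a ≤ p) : a ≤ sisMap K P avgk x a := by
  have hgain := sisGain_eq_one_of_fixedPt hp.ne' hfix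
  calc a = a * sisGain K P avgk x p := by rw [hgain, mul_one]
    _ ≤ a * sisGain K P avgk x a := by gcongr; exact sisGain_antitoneOn hx hP havgk ha hp.le hap
    _ = sisMap K P avgk x a := (sisMap_eq_mul_sisGain a).symm

theorem sisMap_le_of_fixedPt_le {a p : ℝ} (hp : 0 < p) (hfix : sisMap K P avgk x p = p)
    (hpa : p ≤ a) : sisMap K P avgk x a ≤ a := by
  have hgain := sisGain_eq_one_of_fixedPt hp.ne' hfix
  calc sisMap K P avgk x a = a * sisGain K P avgk x a := sisMap_eq_mul_sisGain a
    _ ≤ a * sisGain K P avgk x p := by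
      gcongr
      · linarith
      · exact sisGain_antitoneOn hx hP havgk hp.le (hp.le.trans hpa) hpa
    _ = a := by rw [hgain, mul_one]

end SISMap

theorem fixed_point_iteration_converges_general
    (K : ℕ) (P : ℕ → ℝ)
    (hP0 : ∀ k, 0 ≤ P k)
    (avgk m2 : ℝ)
    (havgk : avgk = ∑ k ∈ Finset.range (K + 1), (k : ℝ) * P k)
    (hm2 : m2 = ∑ k ∈ Finset.range (K + 1), (k : ℝ) ^ 2 * P k)
    (havgk_pos : 0 < avgk)
    (x : ℝ) (hx : avgk / m2 < x)
    (H : ℝ → ℝ)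
    (hH : ∀ y : ℝ, H y = (1 / avgk) * ∑ k' ∈ Finset.range (K + 1),
      (k' : ℝ) ^ 2 * P k' * x * y / (1 + k' * x * y))
    (yx : ℝ) (hyx_mem : yx ∈ Set.Ioo (0 : ℝ) 1) (hyx_fix : yx = H yx)
    (hyx_uniq : ∀ z ∈ Set.Ioo (0 : ℝ) 1, z = H z → z = yx)
    (y : ℕ → ℝ) (hy0 : y 0 ∈ Set.Ioo (0 : ℝ) 1)
    (hiter : ∀ n : ℕ, y (n + 1) = H (y n)) :
    (∀ n : ℕ, y n ∈ Set.Ioo (0 : ℝ) 1) ∧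
    (y 0 < y 1 → Monotone y) ∧
    (y 1 < y 0 → Antitone y) ∧
    Tendsto y atTop (nhds yx) := by
  obtain ⟨a, ha, rfl⟩ : ∃ a ∈ Ioo (0 : ℝ) 1, y = fun n => H^[n] a := ⟨y 0, hy0, funext fun n => by
    induction n with
    | zero => rfl
    | succ n ih => rw [hiter, ih, iterate_succ_apply']⟩
  have hm2_pos : 0 < m2 := havgk_pos.trans_le (havgk ▸ hm2 ▸ sum_natCast_mul_le_sum_sq_mul hP0 _)
  have hx_nonneg : 0 ≤ x := (div_pos havgk_pos hm2_pos).le.trans hx.le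
  obtain rfl : H = sisMap K P avgk x := funext hH
  have hs : (Ioo (0 : ℝ) 1).OrdConnected := ordConnected_Ioo
  have hfix := hyx_fix.symm
  have hIoo : Ioo (0 : ℝ) 1 ⊆ Ici 0 := Ioo_subset_Ioi_self.trans Ioi_subset_Ici_self
  have hmono : MonotoneOn (sisMap K P avgk x) (Ioo 0 1) :=
    (sisMap_monotoneOn hx_nonneg hP0 havgk_pos.le).mono hIoo
  have hle : ∀ z ∈ Ioo (0 : ℝ) 1, z ≤ yx → z ≤ sisMap K P avgk x z := fun z hz =>
    le_sisMap_of_le_of_fixedPt hx_nonneg hP0 havgk_pos.le hyx_mem.1 hfix hz.1.le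
  have hge : ∀ z ∈ Ioo (0 : ℝ) 1, yx ≤ z → sisMap K P avgk x z ≤ z := fun _ _ =>
    sisMap_le_of_fixedPt_le hx_nonneg hP0 havgk_pos.le hyx_mem.1 hfix
  exact ⟨iterate_mem_of_ordConnected hs hyx_mem hfix hmono hle hge ha,
    monotone_iterate_of_lt_map hs hyx_mem hfix hmono hle hge ha,
    antitone_iterate_of_map_lt hs hyx_mem hfix hmono hle hge ha,
    tendsto_iterate_of_ordConnected hs hyx_mem hfix hmono hle hge
      ((sisMap_continuousOn hx_nonneg).mono hIoo) (fun z hz h => hyx_uniq z hz h.symm) ha⟩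

/-- The fixed-point iteration yₙ₊₁ = H(x,yₙ) stays in (0,1),
is monotone (increasing if y₁ > y₀, decreasing if y₁ < y₀), and converges to
the unique fixed point y_x ∈ (0,1) of y = H(x,y), when x⟨k²⟩/⟨k⟩ > 1. -/
theorem fixed_point_iteration_converges
    (K : ℕ) (P : ℕ → ℝ)
    (hP0 : ∀ k, 0 ≤ P k) (hP1 : ∀ k, P k ≤ 1)
    (hPsum : ∑ k ∈ Finset.range (K + 1), P k = 1)
    (avgk m2 : ℝ)
    (havgk : avgk = ∑ k ∈ Finset.range (K + 1), (k : ℝ) * P k)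
    (hm2 : m2 = ∑ k ∈ Finset.range (K + 1), (k : ℝ) ^ 2 * P k)
    (havgk_pos : 0 < avgk)
    (hnontriv : ∃ k ∈ Finset.range (K + 1), 1 ≤ k ∧ 0 < P k)
    (x : ℝ) (hx : avgk / m2 < x)
    (H : ℝ → ℝ)
    (hH : ∀ y : ℝ, H y = (1 / avgk) * ∑ k' ∈ Finset.range (K + 1),
      (k' : ℝ) ^ 2 * P k' * x * y / (1 + k' * x * y))
    (yx : ℝ) (hyx_mem : yx ∈ Set.Ioo (0 : ℝ) 1) (hyx_fix : yx = H yx)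
    (hyx_uniq : ∀ z ∈ Set.Ioo (0 : ℝ) 1, z = H z → z = yx)
    (y : ℕ → ℝ) (hy0 : y 0 ∈ Set.Ioo (0 : ℝ) 1)
    (hiter : ∀ n : ℕ, y (n + 1) = H (y n)) :
    (∀ n : ℕ, y n ∈ Set.Ioo (0 : ℝ) 1) ∧
    (y 0 < y 1 → Monotone y) ∧
    (y 1 < y 0 → Antitone y) ∧
    Tendsto y atTop (nhds yx) :=
  fixed_point_iteration_converges_general K P hP0 avgk m2 havgk hm2 havgk_pos x hx H hH yx hyx_mem
    hyx_fix hyx_uniq y hy0 hiter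
end

section
/- Let P be a probability distribution on {0,...,K} with ⟨k⟩ > 0, and let X = (⟨k⟩/⟨k²⟩, ∞). Define h : X → (0,1) mapping x to the unique fixed point y_x ∈ (0,1) of y = (1/⟨k⟩)·Σ_{k'} k'²P(k')xy/(1+k'xy). Then h is continuous on X. -/
open Finset Filter Topology

/-!
Dividing the fixed-point equation `y = H x y` by `y > 0` turns it into `G x y = ⟨k⟩`, where
`G = degreeWeightedSum K P`. Since `G x` is strictly decreasing in `y` and `G · y` is continuous
in `x`, the level set `{G = ⟨k⟩}` is the graph of a continuous map: if `G x₀ y₁ > ⟨k⟩ > G x₀ y₂`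
for `y₁ < h x₀ < y₂`, these strict inequalities persist for `x` near `x₀` and trap `h x` between
`y₁` and `y₂`.
-/

section LevelSet

variable {α β γ : Type*} [TopologicalSpace α]
  [TopologicalSpace β] [LinearOrder β] [OrderTopology β] [DenselyOrdered β]
  [NoMinOrder β] [NoMaxOrder β]
  [TopologicalSpace γ] [LinearOrder γ] [OrderTopology γ]

theorem continuousOn_of_strictAntiOn_of_apply_eq {F : α → β → γ} {h : α → β} {s : Set α}
    {I : Set β} {c : γ} (hI : IsOpen I) (hanti : ∀ x ∈ s, StrictAntiOn (F x) I)
    (hcont : ∀ y ∈ I, ContinuousOn (fun x => F x y) s) (hmaps : Set.MapsTo h s I)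
    (hF : ∀ x ∈ s, F x (h x) = c) : ContinuousOn h s := by
  intro x₀ hx₀
  have hI₀ : I ∈ 𝓝 (h x₀) := hI.mem_nhds (hmaps hx₀)
  refine tendsto_order.2 ⟨fun a ha => ?_, fun b hb => ?_⟩
  · obtain ⟨y, ⟨hay, hyx₀⟩, hyI⟩ :=
      nonempty_of_mem (inter_mem (Ioo_mem_nhdsLT ha) (mem_nhdsWithin_of_mem_nhds hI₀))
    have hc : c < F x₀ y := hF x₀ hx₀ ▸ hanti x₀ hx₀ hyI (hmaps hx₀) hyx₀
    filter_upwards [(hcont y hyI x₀ hx₀).eventually (eventually_gt_nhds hc),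
      self_mem_nhdsWithin] with x hcx hx
    exact hay.trans (((hanti x hx).lt_iff_gt (hmaps hx) hyI).1 (hF x hx ▸ hcx))
  · obtain ⟨y, ⟨hx₀y, hyb⟩, hyI⟩ :=
      nonempty_of_mem (inter_mem (Ioo_mem_nhdsGT hb) (mem_nhdsWithin_of_mem_nhds hI₀))
    have hc : F x₀ y < c := hF x₀ hx₀ ▸ hanti x₀ hx₀ (hmaps hx₀) hyI hx₀y
    filter_upwards [(hcont y hyI x₀ hx₀).eventually (eventually_lt_nhds hc),
      self_mem_nhdsWithin] with x hcx hx
    exact (((hanti x hx).lt_iff_gt hyI (hmaps hx)).1 (hF x hx ▸ hcx)).trans hyb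

end LevelSet

noncomputable def degreeWeightedSum (K : ℕ) (P : ℕ → ℝ) (x y : ℝ) : ℝ :=
  ∑ k ∈ range (K + 1), (k : ℝ) ^ 2 * P k * x / (1 + k * x * y)

section DegreeWeightedSum

variable {K : ℕ} {P : ℕ → ℝ}

theorem degreeWeightedSum_eq_of_fixed_point {a x y : ℝ} (ha : a ≠ 0) (hy : y ≠ 0)
    (heq : y = (1 / a) * ∑ k ∈ range (K + 1), (k : ℝ) ^ 2 * P k * x * y / (1 + k * x * y)) :
    degreeWeightedSum K P x y = a := by
  have hsum : ∑ k ∈ range (K + 1), (k : ℝ) ^ 2 * P k * x * y / (1 + k * x * y)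
      = degreeWeightedSum K P x y * y := by
    rw [degreeWeightedSum, sum_mul]
    exact sum_congr rfl fun k _ => div_mul_eq_mul_div _ _ _ |>.symm
  rw [hsum] at heq
  field_simp at heq
  exact heq.symm

theorem continuousOn_degreeWeightedSum_left {y : ℝ} (hy : 0 ≤ y) :
    ContinuousOn (fun x => degreeWeightedSum K P x y) (Set.Ici 0) := by
  refine continuousOn_finsetSum _ fun k _ => ContinuousOn.div (by fun_prop) (by fun_prop) ?_
  intro x (hx : 0 ≤ x)
  have : 0 ≤ (k : ℝ) * x * y := by positivity
  linarith

theorem strictAntiOn_div_one_add_mul {a b : ℝ} (ha : 0 < a) (hb : 0 < b) :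
    StrictAntiOn (fun y => a / (1 + b * y)) (Set.Ici 0) := by
  intro y₁ (hy₁ : 0 ≤ y₁) y₂ _ hlt
  exact div_lt_div_of_pos_left ha (by positivity) (by gcongr)

theorem antitoneOn_div_one_add_mul {a b : ℝ} (ha : 0 ≤ a) (hb : 0 ≤ b) :
    AntitoneOn (fun y => a / (1 + b * y)) (Set.Ici 0) := by
  intro y₁ (hy₁ : 0 ≤ y₁) y₂ _ hle
  dsimp only
  gcongr

theorem strictAntiOn_degreeWeightedSum (hP : ∀ k, 0 ≤ P k)
    (hmean : 0 < ∑ k ∈ range (K + 1), (k : ℝ) * P k) {x : ℝ} (hx : 0 < x) :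
    StrictAntiOn (degreeWeightedSum K P x) (Set.Ici 0) := by
  obtain ⟨k₀, hk₀, hk₀P⟩ := exists_ne_zero_of_sum_ne_zero hmean.ne'
  have hk₀pos : 0 < (k₀ : ℝ) := lt_of_le_of_ne k₀.cast_nonneg fun h => hk₀P (by simp [← h])
  have hPk₀ : 0 < P k₀ := lt_of_le_of_ne (hP k₀) fun h => hk₀P (by simp [← h])
  intro y₁ hy₁ y₂ hy₂ hlt
  refine sum_lt_sum (fun k _ => ?_) ⟨k₀, hk₀, ?_⟩
  · exact antitoneOn_div_one_add_mul (by positivity [hP k]) (by positivity) hy₁ hy₂ hlt.le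
  · exact strictAntiOn_div_one_add_mul (by positivity) (by positivity) hy₁ hy₂ hlt

end DegreeWeightedSum

theorem fixed_point_map_continuous_general
    (K : ℕ) (P : ℕ → ℝ)
    (hP0 : ∀ k, 0 ≤ P k)
    (avgk m2 : ℝ)
    (havgk : avgk = ∑ k ∈ Finset.range (K + 1), (k : ℝ) * P k)
    (hm2 : m2 = ∑ k ∈ Finset.range (K + 1), (k : ℝ) ^ 2 * P k)
    (havgk_pos : 0 < avgk)
    (H : ℝ → ℝ → ℝ)
    (hH : ∀ x y : ℝ, H x y = (1 / avgk) * ∑ k' ∈ Finset.range (K + 1),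
      (k' : ℝ) ^ 2 * P k' * x * y / (1 + k' * x * y))
    (h : ℝ → ℝ)
    (hfix : ∀ x ∈ Set.Ioi (avgk / m2), h x ∈ Set.Ioo (0 : ℝ) 1 ∧ h x = H x (h x)) :
    ContinuousOn h (Set.Ioi (avgk / m2)) := by
  have hm2_nonneg : 0 ≤ m2 := hm2 ▸ sum_nonneg fun k _ => by positivity [hP0 k]
  have hpos : Set.Ioi (avgk / m2) ⊆ Set.Ioi 0 :=
    Set.Ioi_subset_Ioi (div_nonneg havgk_pos.le hm2_nonneg)
  refine continuousOn_of_strictAntiOn_of_apply_eq (F := degreeWeightedSum K P) (c := avgk)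
    isOpen_Ioi (fun x hx => ?_) (fun y hy => ?_) (fun x hx => (hfix x hx).1.1) (fun x hx => ?_)
  · exact (strictAntiOn_degreeWeightedSum hP0 (havgk ▸ havgk_pos) (hpos hx)).mono
      Set.Ioi_subset_Ici_self
  · exact (continuousOn_degreeWeightedSum_left (Set.mem_Ioi.1 hy).le).mono
      (hpos.trans Set.Ioi_subset_Ici_self)
  · exact degreeWeightedSum_eq_of_fixed_point havgk_pos.ne' (hfix x hx).1.1.ne' (hH x _ ▸ (hfix x hx).2)

/-- The map x ↦ y_x sending each x ∈ (⟨k⟩/⟨k²⟩, ∞) to the unique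
fixed point y_x ∈ (0,1) of y = (1/⟨k⟩)·Σ_{k'} k'²P(k')xy/(1+k'xy) is
continuous on (⟨k⟩/⟨k²⟩, ∞). -/
theorem fixed_point_map_continuous
    (K : ℕ) (P : ℕ → ℝ)
    (hP0 : ∀ k, 0 ≤ P k) (hP1 : ∀ k, P k ≤ 1)
    (hPsum : ∑ k ∈ Finset.range (K + 1), P k = 1)
    (avgk m2 : ℝ)
    (havgk : avgk = ∑ k ∈ Finset.range (K + 1), (k : ℝ) * P k)
    (hm2 : m2 = ∑ k ∈ Finset.range (K + 1), (k : ℝ) ^ 2 * P k)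
    (havgk_pos : 0 < avgk)
    (H : ℝ → ℝ → ℝ)
    (hH : ∀ x y : ℝ, H x y = (1 / avgk) * ∑ k' ∈ Finset.range (K + 1),
      (k' : ℝ) ^ 2 * P k' * x * y / (1 + k' * x * y))
    (h : ℝ → ℝ)
    (hfix : ∀ x ∈ Set.Ioi (avgk / m2), h x ∈ Set.Ioo (0 : ℝ) 1 ∧ h x = H x (h x))
    (huniq : ∀ x ∈ Set.Ioi (avgk / m2),
      ∀ z ∈ Set.Ioo (0 : ℝ) 1, z = H x z → z = h x) :
    ContinuousOn h (Set.Ioi (avgk / m2)) :=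
  fixed_point_map_continuous_general K P hP0 avgk m2 havgk hm2 havgk_pos H hH h hfix
end

section
/- Under the single-strain degree-based mean-field SIS dynamics dI_k/dt = −(γ+u)I_k + ζk(1−I_k)Θ(t), with Θ(t) = (1/⟨k⟩)Σ_{k'} k'P(k')I_{k'}(t), consider the Lyapunov function V(t) = Σ_k b_k I_k(t) with b_k = kP(k)/(⟨k⟩(u+γ)). Then dV/dt ≤ Θ(t)·(⟨k²⟩ζ/(⟨k⟩(u+γ)) − 1); in particular, if ζ⟨k²⟩/(⟨k⟩(u+γ)) < 1, then dV/dt < 0 whenever Θ(t) > 0. -/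
/-!
Since `I_k ≥ 0` and `Θ ≥ 0`, bounding `1 - I_k ≤ 1` in the infection term gives
`V' ≤ -(u+γ) Σ b_k I_k + ζ Θ Σ b_k k`. The weights `b_k = k P(k) / (⟨k⟩(u+γ))` are chosen so that
the first sum is `Θ / (u+γ)` and the second is `⟨k²⟩ / (⟨k⟩(u+γ))`.
-/

open Finset

theorem sis_rate_le_linearized {c ζ x i θ : ℝ} (hζx : 0 ≤ ζ * x) (hi : 0 ≤ i) (hθ : 0 ≤ θ) :
    -c * i + ζ * x * (1 - i) * θ ≤ -c * i + ζ * x * θ := by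
  nlinarith [mul_nonneg (mul_nonneg hζx hi) hθ]

theorem sum_weighted_sis_rate_le {ι : Type*} (s : Finset ι) (w x i : ι → ℝ) {c ζ θ : ℝ}
    (hw : ∀ k ∈ s, 0 ≤ w k) (hx : ∀ k ∈ s, 0 ≤ x k) (hi : ∀ k ∈ s, 0 ≤ i k)
    (hζ : 0 ≤ ζ) (hθ : 0 ≤ θ) :
    ∑ k ∈ s, w k * (-c * i k + ζ * x k * (1 - i k) * θ)
      ≤ -c * ∑ k ∈ s, w k * i k + ζ * θ * ∑ k ∈ s, w k * x k := calc
  _ ≤ ∑ k ∈ s, w k * (-c * i k + ζ * x k * θ) := sum_le_sum fun k hk =>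
        mul_le_mul_of_nonneg_left
          (sis_rate_le_linearized (mul_nonneg hζ (hx k hk)) (hi k hk) hθ) (hw k hk)
  _ = _ := by
        simp only [mul_sum]
        rw [← sum_add_distrib]
        exact sum_congr rfl fun k _ => by ring

theorem lyapunov_disease_free_general
    (K : ℕ) (P : ℕ → ℝ)
    (hP0 : ∀ k, 0 ≤ P k)
    (avgk m2 : ℝ)
    (hm2 : m2 = ∑ k ∈ Finset.range (K + 1), (k : ℝ) ^ 2 * P k)
    (havgk_pos : 0 < avgk)
    (γ ζ u : ℝ) (hγ : 0 < γ) (hζ : 0 < ζ) (hu : 0 ≤ u)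
    (I : ℕ → ℝ → ℝ)
    (Θ : ℝ → ℝ)
    (hΘ : ∀ t : ℝ, Θ t = (1 / avgk) * ∑ k ∈ Finset.range (K + 1),
      (k : ℝ) * P k * I k t)
    (t : ℝ)
    (hI01 : ∀ k, 0 ≤ I k t ∧ I k t ≤ 1)
    (hdyn : ∀ k ∈ Finset.range (K + 1),
      HasDerivAt (I k) (-(γ + u) * I k t + ζ * k * (1 - I k t) * Θ t) t)
    (V : ℝ → ℝ)
    (hV : ∀ s : ℝ, V s = ∑ k ∈ Finset.range (K + 1),
      ((k : ℝ) * P k / (avgk * (u + γ))) * I k s) :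
    ∃ v : ℝ, HasDerivAt V v t ∧
      v ≤ Θ t * (m2 * ζ / (avgk * (u + γ)) - 1) ∧
      (ζ * m2 / (avgk * (u + γ)) < 1 → 0 < Θ t → v < 0) := by
  set A := avgk * (u + γ)
  have hA : 0 < A := mul_pos havgk_pos (by linarith)
  have hΘ_nonneg : 0 ≤ Θ t := by
    rw [hΘ]
    exact mul_nonneg (by positivity)
      (sum_nonneg fun k _ => by have := hP0 k; have := (hI01 k).1; positivity)
  have hderiv : HasDerivAt V (∑ k ∈ range (K + 1), (k * P k / A) *
      (-(γ + u) * I k t + ζ * k * (1 - I k t) * Θ t)) t := by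
    rw [funext hV]
    exact HasDerivAt.fun_sum fun k hk => (hdyn k hk).const_mul _
  have hI_sum : ∑ k ∈ range (K + 1), k * P k / A * I k t = avgk * Θ t / A := by
    rw [hΘ, ← mul_assoc, mul_one_div_cancel havgk_pos.ne', one_mul, sum_div]
    exact sum_congr rfl fun k _ => by ring
  have hk_sum : ∑ k ∈ range (K + 1), k * P k / A * k = m2 / A := by
    rw [hm2, sum_div]
    exact sum_congr rfl fun k _ => by ring
  have hbound := calc
    _ ≤ -(γ + u) * (avgk * Θ t / A) + ζ * Θ t * (m2 / A) := hI_sum ▸ hk_sum ▸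
          sum_weighted_sis_rate_le (range (K + 1)) (fun k => k * P k / A) (fun k => k)
            (fun k => I k t) (fun k _ => by have := hP0 k; positivity)
            (fun k _ => by positivity) (fun k _ => (hI01 k).1) hζ.le hΘ_nonneg
    _ = Θ t * (m2 * ζ / A - 1) := by field_simp; ring
  refine ⟨_, hderiv, hbound, fun hR₀ hΘ_pos => hbound.trans_lt ?_⟩
  exact mul_neg_of_pos_of_neg hΘ_pos (by rw [mul_comm m2]; linarith)

/-- Along the single-strain controlled SIS dynamics, the Lyapunov
function V(t) = Σ_k b_k I_k(t), b_k = kP(k)/(⟨k⟩(u+γ)), has a derivative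
bounded by Θ(t)·(⟨k²⟩ζ/(⟨k⟩(u+γ)) − 1); in particular the derivative is
negative when ζ⟨k²⟩/(⟨k⟩(u+γ)) < 1 and Θ(t) > 0. -/
theorem lyapunov_disease_free
    (K : ℕ) (P : ℕ → ℝ)
    (hP0 : ∀ k, 0 ≤ P k) (hP1 : ∀ k, P k ≤ 1)
    (hPsum : ∑ k ∈ Finset.range (K + 1), P k = 1)
    (avgk m2 : ℝ)
    (havgk : avgk = ∑ k ∈ Finset.range (K + 1), (k : ℝ) * P k)
    (hm2 : m2 = ∑ k ∈ Finset.range (K + 1), (k : ℝ) ^ 2 * P k)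
    (havgk_pos : 0 < avgk)
    (γ ζ u : ℝ) (hγ : 0 < γ) (hζ : 0 < ζ) (hu : 0 ≤ u)
    (I : ℕ → ℝ → ℝ)
    (Θ : ℝ → ℝ)
    (hΘ : ∀ t : ℝ, Θ t = (1 / avgk) * ∑ k ∈ Finset.range (K + 1),
      (k : ℝ) * P k * I k t)
    (t : ℝ)
    (hI01 : ∀ k, 0 ≤ I k t ∧ I k t ≤ 1)
    (hdyn : ∀ k ∈ Finset.range (K + 1),
      HasDerivAt (I k) (-(γ + u) * I k t + ζ * k * (1 - I k t) * Θ t) t)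
    (V : ℝ → ℝ)
    (hV : ∀ s : ℝ, V s = ∑ k ∈ Finset.range (K + 1),
      ((k : ℝ) * P k / (avgk * (u + γ))) * I k s) :
    ∃ v : ℝ, HasDerivAt V v t ∧
      v ≤ Θ t * (m2 * ζ / (avgk * (u + γ)) - 1) ∧
      (ζ * m2 / (avgk * (u + γ)) < 1 → 0 < Θ t → v < 0) :=
  lyapunov_disease_free_general K P hP0 avgk m2 hm2 havgk_pos γ ζ u hγ hζ hu I Θ hΘ t hI01 hdyn V hV
end
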